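/- Let R be a discrete valuation ring with fraction field K and residue field L, and let n ≥ 1, d ≥ 2, r ≥ 0 be integers. Let G_0, …, G_r ∈ R[x_0, …, x_n] be homogeneous polynomials of degree d whose reductions F_0, …, F_r ∈ L[x_0, …, x_n] modulo the maximal ideal of R are linearly independent over L and have the property that every nonzero L-linear combination of F_0, …, F_r cuts out a smooth hypersurface in ℙ^n over L. Then every nonzero K-linear combination of the images of G_0, …, G_r in K[x_0, …, x_n] cuts out a smooth hypersurface in ℙ^n over K. -/

import Mathlib

open MvPolynomial

set_option maxHeartbeats 1000000

lemma eval_smul_of_isHomogeneous {σ S : Type*} [CommSemiring S] {φ : MvPolynomial σ S} {m : ℕ}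
    (h : φ.IsHomogeneous m) (c : S) (t : σ → S) :
    eval (c • t) φ = c ^ m * eval t φ := by
  rw [eval_eq, eval_eq, Finset.mul_sum]
  refine Finset.sum_congr rfl fun d hd => ?_
  have hdeg : d.degree = m := by
    rw [Finsupp.degree_eq_weight_one]
    exact h (mem_support_iff.mp hd)
  have : ∏ i ∈ d.support, (c • t) i ^ d i
      = (∏ i ∈ d.support, c ^ d i) * ∏ i ∈ d.support, t i ^ d i := by
    rw [← Finset.prod_mul_distrib]
    exact Finset.prod_congr rfl fun i _ => by simp [mul_pow]
  rw [this, Finset.prod_pow_eq_pow_sum]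
  rw [show ∑ i ∈ d.support, d i = d.degree from rfl, hdeg]
  ring

lemma isHomogeneous_pderiv {σ S : Type*} [CommSemiring S] [DecidableEq σ]
    {φ : MvPolynomial σ S} {m : ℕ} (h : φ.IsHomogeneous m) (i : σ) :
    (pderiv i φ).IsHomogeneous (m - 1) := by
  conv_lhs => rw [φ.as_sum]
  rw [map_sum]
  refine IsHomogeneous.sum _ _ _ fun d hd => ?_
  rw [pderiv_monomial]
  rcases eq_or_ne (d i) 0 with h0 | h0
  · rw [h0]; simp [isHomogeneous_zero]
  · refine isHomogeneous_monomial _ ?_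
    have hdeg : d.degree = m := by
      rw [Finsupp.degree_eq_weight_one]
      exact h (mem_support_iff.mp hd)
    have hle : Finsupp.single i 1 ≤ d := by
      rwa [Finsupp.single_le_iff, Nat.one_le_iff_ne_zero]
    have : (d - Finsupp.single i 1) + Finsupp.single i 1 = d := tsub_add_cancel_of_le hle
    have hd1 : (d - Finsupp.single i 1).degree + 1 = m := by
      have h2 := congrArg Finsupp.degree this
      rw [Finsupp.degree_eq_weight_one] at h2 hdeg ⊢
      rw [map_add] at h2
      simp only [Finsupp.weight_apply, Finsupp.sum_single_index, Pi.one_apply, smul_eq_mul,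
        mul_one] at h2 hdeg ⊢
      omega
    omega


lemma dvr_scale {R K : Type*} [CommRing R] [IsDomain R] [IsDiscreteValuationRing R]
    [Field K] [Algebra R K] [IsFractionRing R K] {ι : Type*} [Fintype ι]
    {c : ι → K} (hc : c ≠ 0) :
    ∃ (u : K) (b : ι → R), u ≠ 0 ∧ (∀ i, algebraMap R K (b i) = u * c i) ∧
      ∃ j, IsLocalRing.residue R (b j) ≠ 0 := by
  obtain ⟨s, hs⟩ := IsLocalization.exist_integer_multiples (nonZeroDivisors R) Finset.univ c
  choose r hr using fun i => hs i (Finset.mem_univ i)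
  -- hr : ∀ i, algebraMap R K (r i) = (s : R) • c i
  obtain ⟨i0, hi0⟩ : ∃ i, c i ≠ 0 := by
    by_contra h; push_neg at h; exact hc (funext h)
  have hs0 : algebraMap R K (s : R) ≠ 0 := by
    simpa using IsFractionRing.to_map_ne_zero_of_mem_nonZeroDivisors s.2
  have hr0 : r i0 ≠ 0 := by
    intro h
    apply mul_ne_zero hs0 hi0
    rw [← Algebra.smul_def, ← hr i0, h, map_zero]
  obtain ⟨g, hg⟩ : ∃ g, Ideal.span (Set.range r) = Ideal.span {g} := by
    obtain ⟨g, hg⟩ := (IsPrincipalIdealRing.principal (Ideal.span (Set.range r))).principal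
    exact ⟨g, by rw [hg]⟩
  have hgmem : ∀ i, r i ∈ Ideal.span ({g} : Set R) := fun i => by
    rw [← hg]; exact Ideal.subset_span ⟨i, rfl⟩
  choose b hb using fun i => Ideal.mem_span_singleton'.mp (hgmem i)
  -- hb : b i * g = r i
  have hg0 : g ≠ 0 := by
    intro h
    apply hr0
    have := hb i0
    rw [h, mul_zero] at this; exact this.symm
  have hbu : ∃ j, ¬ b j ∈ IsLocalRing.maximalIdeal R := by
    by_contra h
    push_neg at h
    have hle : Ideal.span (Set.range r) ≤ Ideal.span {g} * IsLocalRing.maximalIdeal R := by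
      rw [Ideal.span_le]
      rintro _ ⟨i, rfl⟩
      have := Ideal.mul_mem_mul (Ideal.mem_span_singleton_self g) (h i)
      rwa [mul_comm g (b i), hb i] at this
    have hg' : g ∈ Ideal.span ({g} : Set R) * IsLocalRing.maximalIdeal R := by
      apply hle; rw [hg]; exact Ideal.mem_span_singleton_self g
    rw [Ideal.mem_span_singleton_mul] at hg'
    obtain ⟨y, hy, hyg⟩ := hg'
    have : g * (1 - y) = 0 := by ring_nf; rw [mul_comm] at hyg; linear_combination -hyg
    rcases mul_eq_zero.mp this with h' | h'
    · exact hg0 h'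
    · have : IsUnit (1 - y) := IsLocalRing.isUnit_one_sub_self_of_mem_nonunits y hy
      exact this.ne_zero h'
  obtain ⟨j, hj⟩ := hbu
  refine ⟨algebraMap R K (s : R) / algebraMap R K g, b, ?_, ?_, j, ?_⟩
  · exact div_ne_zero hs0 (fun h => hg0 ((IsFractionRing.injective R K) (by simpa using h)))
  · intro i
    have hgK : algebraMap R K g ≠ 0 :=
      fun h => hg0 ((IsFractionRing.injective R K) (by simpa using h))
    field_simp
    rw [← map_mul, hb i, hr i, Algebra.smul_def]
  · intro h
    exact hj (Ideal.Quotient.eq_zero_iff_mem.mp h)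


lemma residue_eval_algebraic {R K Kb : Type*} [CommRing R] [IsDomain R] [IsDiscreteValuationRing R]
    [Field K] [Algebra R K] [IsFractionRing R K] [Field Kb] [Algebra K Kb]
    [Algebra.IsAlgebraic K Kb]
    (A : ValuationSubring Kb)
    (hA : ∀ y : R, algebraMap K Kb (algebraMap R K y) ∈ A)
    (ψ : R →+* A) (hψ : ∀ y, (ψ y : Kb) = algebraMap K Kb (algebraMap R K y))
    [IsLocalHom ψ] (x : IsLocalRing.ResidueField A) :
    ∃ q : Polynomial (IsLocalRing.ResidueField R), q ≠ 0 ∧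
      Polynomial.eval₂ (IsLocalRing.ResidueField.map ψ) x q = 0 := by
  obtain ⟨y, rfl⟩ := IsLocalRing.residue_surjective x
  obtain ⟨p, hp0, hp⟩ := (Algebra.IsAlgebraic.isAlgebraic (R := K) (y : Kb))
  set N := p.natDegree
  have hcne : (fun i : Fin (N + 1) => p.coeff i) ≠ 0 := by
    intro h
    have := congrFun h (Fin.last N)
    simp only [Pi.zero_apply, Fin.val_last] at this
    exact (Polynomial.leadingCoeff_ne_zero.mpr hp0) this
  obtain ⟨u, b, hu, hub, j, hbj⟩ := dvr_scale (R := R) (K := K) hcne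
  -- the lifted polynomial over R
  set q : Polynomial R := ∑ i : Fin (N + 1), Polynomial.C (b i) * Polynomial.X ^ (i : ℕ) with hq
  have hqcoeff : ∀ i : Fin (N + 1), q.coeff i = b i := by
    intro i
    rw [hq, Polynomial.finset_sum_coeff]
    rw [Finset.sum_eq_single i]
    · simp
    · intro k _ hki
      simp only [Polynomial.coeff_C_mul, Polynomial.coeff_X_pow]
      rw [if_neg (by simpa [Fin.val_eq_val] using hki.symm), mul_zero]
    · simp
  -- evaluate q at y over Kb
  have hqeval : Polynomial.eval₂ ((algebraMap K Kb).comp (algebraMap R K)) (y : Kb) q = 0 := by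
    have : Polynomial.eval₂ ((algebraMap K Kb).comp (algebraMap R K)) (y : Kb) q
        = algebraMap K Kb u * Polynomial.aeval (y : Kb) p := by
      rw [hq]
      rw [Polynomial.eval₂_finset_sum]
      have haev : Polynomial.aeval (y : Kb) p
          = ∑ i ∈ Finset.range (N + 1), algebraMap K Kb (p.coeff i) * (y : Kb) ^ i := by
        rw [Polynomial.aeval_def, Polynomial.eval₂_eq_sum_range]
      rw [haev, Finset.mul_sum, ← Fin.sum_univ_eq_sum_range
        (fun i => algebraMap K Kb u * (algebraMap K Kb (p.coeff i) * (y:Kb) ^ i))]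
      refine Finset.sum_congr rfl fun i _ => ?_
      simp only [Polynomial.eval₂_mul, Polynomial.eval₂_C, Polynomial.eval₂_X_pow,
        RingHom.comp_apply]
      rw [hub i, map_mul]
      ring
    rw [this, hp, mul_zero]
  -- transfer to A
  have hmemA : Polynomial.eval₂ ψ y q = 0 := by
    have hcomp : (A.subtype.comp ψ) = (algebraMap K Kb).comp (algebraMap R K) := by
      ext z; exact hψ z
    have := Polynomial.hom_eval₂ (g := A.subtype) (f := ψ) (p := q) y
    rw [hcomp] at this
    have h0 : A.subtype (Polynomial.eval₂ ψ y q) = 0 := by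
      rw [this]; exact hqeval
    exact Subtype.val_injective h0
  -- push to residue field
  refine ⟨q.map (IsLocalRing.residue R), ?_, ?_⟩
  · intro h
    apply hbj
    have := congrArg (fun Q => Polynomial.coeff Q (j : ℕ)) h
    simpa [Polynomial.coeff_map, hqcoeff j] using this
  · have := Polynomial.hom_eval₂ (g := IsLocalRing.residue A) (f := ψ) (p := q) y
    rw [hmemA, map_zero] at this
    rw [Polynomial.eval₂_map, IsLocalRing.ResidueField.map_comp_residue ψ]
    exact this.symm


/-- A homogeneous polynomial `F` of degree `d` in `k[x_0, …, x_n]` (over a field `k`) cuts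
out a smooth hypersurface in `ℙ^n` if there is no point `t ≠ 0` with coordinates in an
algebraic closure of `k` at which `F` and all its partial derivatives vanish
simultaneously. -/
def CutsOutSmoothHypersurface {k : Type*} [Field k] {n : ℕ}
    (F : MvPolynomial (Fin (n + 1)) k) : Prop :=
  ∀ t : Fin (n + 1) → AlgebraicClosure k, t ≠ 0 →
    ¬ (eval t (map (algebraMap k (AlgebraicClosure k)) F) = 0 ∧
       ∀ i : Fin (n + 1),
         eval t (map (algebraMap k (AlgebraicClosure k)) (pderiv i F)) = 0)

/-- Let `R` be a DVR with fraction field `K` and residue field `L`. If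
`G₀, …, G_r ∈ R[x_0, …, x_n]` are degree-`d` forms whose reductions modulo the maximal
ideal are linearly independent over `L` and span an `L`-smooth linear system, then every
nonzero `K`-linear combination of the images of the `Gᵢ` in `K[x_0, …, x_n]` cuts out a
smooth hypersurface in `ℙ^n` over `K`. -/
theorem lifting_smooth_linear_system_of_dvr
    {R : Type*} [CommRing R] [IsDomain R] [IsDiscreteValuationRing R]
    {K : Type*} [Field K] [Algebra R K] [IsFractionRing R K]
    (n d r : ℕ) (hn : 1 ≤ n) (hd : 2 ≤ d)
    (G : Fin (r + 1) → MvPolynomial (Fin (n + 1)) R)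
    (hhom : ∀ i, (G i).IsHomogeneous d)
    (hli : LinearIndependent (IsLocalRing.ResidueField R)
      (fun i => map (IsLocalRing.residue R) (G i)))
    (hsm : ∀ b : Fin (r + 1) → IsLocalRing.ResidueField R, b ≠ 0 →
      CutsOutSmoothHypersurface (∑ i, b i • map (IsLocalRing.residue R) (G i))) :
    ∀ a : Fin (r + 1) → K, a ≠ 0 →
      CutsOutSmoothHypersurface (∑ i, a i • map (algebraMap R K) (G i)) := by
    classical
  intro a ha t ht
  rintro ⟨h0, h1⟩
  obtain ⟨u, b, hu, hab, j, hbj⟩ := dvr_scale (R := R) (K := K) ha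
  set H : MvPolynomial (Fin (n + 1)) R := ∑ i, b i • G i with hH
  have hHhom : H.IsHomogeneous d := by
    refine MvPolynomial.IsHomogeneous.sum _ _ _ fun i _ => ?_
    rw [smul_eq_C_mul]
    exact (hhom i).C_mul (b i)
  have hHred : map (IsLocalRing.residue R) H
      = ∑ i, IsLocalRing.residue R (b i) • map (IsLocalRing.residue R) (G i) := by
    rw [hH, map_sum]
    refine Finset.sum_congr rfl fun i _ => ?_
    rw [smul_eq_C_mul, smul_eq_C_mul, map_mul, map_C]
  set F : MvPolynomial (Fin (n + 1)) K := ∑ i, a i • map (algebraMap R K) (G i) with hF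
  have hHK : map (algebraMap R K) H = u • F := by
    rw [hH, hF, map_sum, Finset.smul_sum]
    refine Finset.sum_congr rfl fun i _ => ?_
    rw [smul_eq_C_mul, smul_eq_C_mul, smul_eq_C_mul, map_mul, map_C, hab i, C_mul, mul_assoc]
  let Kb := AlgebraicClosure K
  set φ : R →+* Kb := (algebraMap K Kb).comp (algebraMap R K) with hφ
  have hHt : eval t (map φ H) = 0 := by
    rw [hφ, ← map_map, hHK, smul_eq_C_mul, map_mul, map_C, (eval t).map_mul, eval_C, h0,
      mul_zero]
  have hHpt : ∀ i, eval t (map φ (pderiv i H)) = 0 := by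
    intro i
    rw [hφ, ← map_map, ← pderiv_map, hHK, smul_eq_C_mul, pderiv_C_mul, map_mul, map_C,
      (eval t).map_mul, eval_C, h1 i, mul_zero]
  -- valuation subring of Kb dominating R
  obtain ⟨A, hmem, hloc⟩ := IsLocalRing.exists_factor_valuationRing φ
  set ψ : R →+* A.toSubring := φ.codRestrict A.toSubring hmem with hψdef
  haveI : IsLocalHom ψ := hloc
  haveI : IsLocalRing A.toSubring := A.isLocalRing
  -- choose coordinate with maximal valuation
  obtain ⟨i1, hi1⟩ : ∃ i, t i ≠ 0 := by
    by_contra h; push_neg at h; exact ht (funext h)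
  obtain ⟨j0, -, hj0⟩ := Finset.exists_max_image Finset.univ (fun i => A.valuation (t i))
    ⟨i1, Finset.mem_univ i1⟩
  have hvj0 : A.valuation (t j0) ≠ 0 := by
    intro h
    apply hi1
    have h2 := hj0 i1 (Finset.mem_univ i1)
    rw [h, le_zero_iff] at h2
    exact (Valuation.zero_iff _).mp h2
  have htj0 : t j0 ≠ 0 := fun h => hvj0 (by rw [h, map_zero])
  set c : Kb := (t j0)⁻¹ with hc
  have hsAmem : ∀ i, t i * c ∈ A := by
    intro i
    rw [← ValuationSubring.valuation_le_one_iff, hc, map_mul, map_inv₀,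
      mul_inv_le_iff₀ (zero_lt_iff.mpr hvj0), one_mul]
    exact hj0 i (Finset.mem_univ i)
  set sA : Fin (n + 1) → A.toSubring := fun i => ⟨t i * c, hsAmem i⟩ with hsA
  have hsAj0 : sA j0 = 1 := Subtype.ext (by simp [hsA, hc, mul_inv_cancel₀ htj0])
  -- residue fields and the embedding
  set L := IsLocalRing.ResidueField R with hL
  set κ := IsLocalRing.ResidueField A.toSubring with hκ
  set lm : L →+* κ := IsLocalRing.ResidueField.map ψ with hlm
  letI : Algebra L κ := lm.toAlgebra
  haveI : Algebra.IsAlgebraic L κ := by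
    constructor
    intro x
    obtain ⟨q, hq0, hq⟩ := residue_eval_algebraic (K := K) A (fun y => hmem y) ψ (fun y => rfl) x
    exact ⟨q, hq0, by rwa [Polynomial.aeval_def]⟩
  haveI : NoZeroSMulDivisors L κ :=
    inferInstance
  set Lb := AlgebraicClosure L with hLb
  set ε : κ →ₐ[L] Lb := IsAlgClosed.lift with hε
  set tL : Fin (n + 1) → Lb := ⇑ε ∘ (fun i => IsLocalRing.residue A.toSubring (sA i)) with htL
  -- the key transfer
  have hsub : (A.toSubring.subtype).comp ψ = φ := RingHom.ext fun x => rfl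
  have hθ : (algebraMap L Lb).comp (IsLocalRing.residue R)
      = ε.toRingHom.comp ((IsLocalRing.residue A.toSubring).comp ψ) := by
    have h1' : ε.toRingHom.comp (algebraMap L κ) = algebraMap L Lb := ε.comp_algebraMap
    have h2' : (algebraMap L κ) = lm := rfl
    rw [← h1', h2', RingHom.comp_assoc, hlm, IsLocalRing.ResidueField.map_comp_residue]
  have key : ∀ (P : MvPolynomial (Fin (n + 1)) R) (m : ℕ), P.IsHomogeneous m →
      eval t (map φ P) = 0 →
      eval tL (map (algebraMap L Lb) (map (IsLocalRing.residue R) P)) = 0 := by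
    intro P m hPm hPt
    have hK1 : eval (fun i => (sA i : Kb)) (map φ P) = 0 := by
      have he : (fun i => (sA i : Kb)) = c • t := by
        funext i; simp [hsA, mul_comm, Pi.smul_apply, smul_eq_mul]
      rw [he, eval_smul_of_isHomogeneous (hPm.map φ) c t, hPt, mul_zero]
    have hA1 : eval₂ ψ sA P = 0 := by
      apply Subtype.val_injective
      have := eval₂_comp_left A.toSubring.subtype ψ sA P
      rw [hsub] at this
      have h3 : A.toSubring.subtype (eval₂ ψ sA P) = 0 := by
        rw [this, ← eval_map]
        exact hK1
      exact h3
    have hA2 : eval₂ ((IsLocalRing.residue A.toSubring).comp ψ)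
        (fun i => IsLocalRing.residue A.toSubring (sA i)) P = 0 := by
      have := eval₂_comp_left (IsLocalRing.residue A.toSubring) ψ sA P
      rw [hA1, map_zero] at this
      exact this.symm
    have h4 := eval₂_comp_left (ε.toRingHom) ((IsLocalRing.residue A.toSubring).comp ψ)
      (fun i => IsLocalRing.residue A.toSubring (sA i)) P
    rw [hA2, map_zero] at h4
    rw [htL, map_map, hθ, eval_map]
    exact h4.symm
  -- contradiction with smoothness over the residue field
  have hbred : (fun i => IsLocalRing.residue R (b i)) ≠ 0 := fun h => hbj (congrFun h j)
  refine hsm _ hbred tL ?_ ⟨?_, ?_⟩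
  · intro h
    have := congrFun h j0
    rw [htL] at this
    simp only [Function.comp_apply, hsAj0, map_one, Pi.zero_apply] at this
    exact one_ne_zero this
  · rw [← hHred]
    exact key H d hHhom hHt
  · intro i
    rw [← hHred, pderiv_map]
    exact key (pderiv i H) (d - 1) (isHomogeneous_pderiv hHhom i) (hHpt i)
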